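/- For f, g in SL(2,C), \gamma(f, g f g^{-1}) = \gamma(f,g)(\gamma(f,g) - \beta(f)). -/

import Mathlib

open Matrix

namespace Stmt4

/-- `β(h) = (tr h)² - 4` -/
noncomputable def β (h : SpecialLinearGroup (Fin 2) ℂ) : ℂ :=
  (Matrix.trace (h : Matrix (Fin 2) (Fin 2) ℂ)) ^ 2 - 4

/-- `γ(f,g) = tr (f g f⁻¹ g⁻¹) - 2` -/
noncomputable def γ (f g : SpecialLinearGroup (Fin 2) ℂ) : ℂ :=
  Matrix.trace ((f * g * f⁻¹ * g⁻¹ : SpecialLinearGroup (Fin 2) ℂ) :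
    Matrix (Fin 2) (Fin 2) ℂ) - 2

end Stmt4

/-!
Write `c = ⁅f, g⁆` and `t = tr c`. Since `g f g⁻¹ = c⁻¹ f`, the commutator `⁅f, g f g⁻¹⁆` equals
`⁅f, c⁻¹⁆`, and `f c⁻¹ = (f g) f (f g)⁻¹` is conjugate to `f`. The Fricke identity
`tr ⁅A, B⁆ = (tr A)² + (tr B)² + (tr AB)² - tr A tr B tr AB - 2` in `SL(2)`, applied to `A = f`,
`B = c⁻¹` with `tr c⁻¹ = t`, gives `tr ⁅f, g f g⁻¹⁆ - 2 = (t - 2)(t + 2 - (tr f)²)`.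
-/

open scoped commutatorElement

theorem commutatorElement_conj_self_right {G : Type*} [Group G] (f g : G) :
    ⁅f, g * f * g⁻¹⁆ = ⁅f, ⁅f, g⁆⁻¹⁆ := by
  simp only [commutatorElement_def]
  group

namespace Matrix

variable {R : Type*} [CommRing R]

theorem trace_mul_mul_adjugate_mul_adjugate_fin_two (A B : Matrix (Fin 2) (Fin 2) R) :
    trace (A * B * adjugate A * adjugate B) =
      trace A ^ 2 * det B + trace B ^ 2 * det A + trace (A * B) ^ 2
        - trace A * trace B * trace (A * B) - 2 * det A * det B := by
  simp only [adjugate_fin_two, trace_fin_two, det_fin_two, mul_apply, Fin.sum_univ_two, of_apply,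
    cons_val', cons_val_zero, cons_val_one, empty_val', cons_val_fin_one]
  ring

namespace SpecialLinearGroup

theorem trace_commutatorElement_fin_two (A B : SpecialLinearGroup (Fin 2) R) :
    trace ((⁅A, B⁆ : SpecialLinearGroup (Fin 2) R) : Matrix (Fin 2) (Fin 2) R) =
      trace (A : Matrix (Fin 2) (Fin 2) R) ^ 2 + trace (B : Matrix (Fin 2) (Fin 2) R) ^ 2
        + trace (A * B : Matrix (Fin 2) (Fin 2) R) ^ 2
        - trace (A : Matrix (Fin 2) (Fin 2) R) * trace (B : Matrix (Fin 2) (Fin 2) R)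
          * trace (A * B : Matrix (Fin 2) (Fin 2) R) - 2 := by
  simpa [commutatorElement_def, coe_inv, det_coe] using
    trace_mul_mul_adjugate_mul_adjugate_fin_two (A : Matrix (Fin 2) (Fin 2) R) B

theorem trace_inv_fin_two (A : SpecialLinearGroup (Fin 2) R) :
    trace ((A⁻¹ : SpecialLinearGroup (Fin 2) R) : Matrix (Fin 2) (Fin 2) R) =
      trace (A : Matrix (Fin 2) (Fin 2) R) := by
  rw [coe_inv, adjugate_fin_two, trace_fin_two, trace_fin_two]
  simp [add_comm]

theorem trace_conj {n : Type*} [Fintype n] [DecidableEq n] (A B : SpecialLinearGroup n R) :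
    trace ((B * A * B⁻¹ : SpecialLinearGroup n R) : Matrix n n R) = trace (A : Matrix n n R) := by
  rw [coe_mul, coe_mul, trace_mul_cycle, ← coe_mul, inv_mul_cancel, coe_one, one_mul]

end SpecialLinearGroup

end Matrix

namespace Stmt4

/-- `γ(f, g f g⁻¹) = γ(f,g) (γ(f,g) - β(f))`. -/
theorem gamma_conj (f g : SpecialLinearGroup (Fin 2) ℂ) :
    γ f (g * f * g⁻¹) = γ f g * (γ f g - β f) := by
  set c := ⁅f, g⁆ with hc
  have hconj : f * c⁻¹ = (f * g) * f * (f * g)⁻¹ := by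
    simp only [hc, commutatorElement_def]
    group
  have htrace : trace ((⁅f, c⁻¹⁆ : SpecialLinearGroup (Fin 2) ℂ) : Matrix (Fin 2) (Fin 2) ℂ) =
      2 * trace (f : Matrix (Fin 2) (Fin 2) ℂ) ^ 2 + trace (c : Matrix (Fin 2) (Fin 2) ℂ) ^ 2
        - trace (f : Matrix (Fin 2) (Fin 2) ℂ) ^ 2 * trace (c : Matrix (Fin 2) (Fin 2) ℂ) - 2 := by
    rw [Matrix.SpecialLinearGroup.trace_commutatorElement_fin_two,
      Matrix.SpecialLinearGroup.trace_inv_fin_two, ← Matrix.SpecialLinearGroup.coe_mul f c⁻¹,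
      hconj, Matrix.SpecialLinearGroup.trace_conj]
    ring
  simp only [γ, β, ← commutatorElement_def, commutatorElement_conj_self_right, ← hc, htrace]
  ring

end Stmt4
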